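/- Let A be an N×N Metzler matrix that is Hurwitz stable (all eigenvalues have negative real part). Then A is diagonally stable: there exists a diagonal matrix D with positive diagonal entries such that AᵀD + DA is negative definite. -/

import Mathlib

/-!
Write `A = B - σ I` with `B` entrywise nonnegative. For large `s`, `(s I - B)⁻¹` is a Neumann
series in `B / s`, hence entrywise nonnegative; and if `R = (s I - B)⁻¹ ≥ 0` then
`((s - h) I - B)⁻¹ = (I - h R)⁻¹ R ≥ 0` for small `h ≥ 0`. Since `s I - B` stays invertible for
`s ≥ σ` (Hurwitz stability), continuous induction brings this down to `(-A)⁻¹ ≥ 0`.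
Hence `x = (-A)⁻¹ 1` and `z = (-Aᵀ)⁻¹ 1` are positive vectors with `A x = Aᵀ z = -1`.
For `D = diagonal (z / x)` the symmetric Metzler matrix `Q = Aᵀ D + D A` satisfies
`Q x = -1 - z / x < 0`, and writing `v = x u`,
`vᵀ Q v = ∑ᵢ (Q x)ᵢ xᵢ uᵢ² - ½ ∑ᵢⱼ Qᵢⱼ xᵢ xⱼ (uᵢ - uⱼ)² < 0` for `v ≠ 0`.
-/

open Matrix

namespace Matrix

def IsMetzler {n : Type*} (A : Matrix n n ℝ) : Prop :=
  ∀ i j, i ≠ j → 0 ≤ A i j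

lemma mul_apply_nonneg {l m n : Type*} [Fintype m] {X : Matrix l m ℝ} {Y : Matrix m n ℝ}
    (hX : ∀ i j, 0 ≤ X i j) (hY : ∀ i j, 0 ≤ Y i j) (i : l) (j : n) : 0 ≤ (X * Y) i j :=
  Finset.sum_nonneg fun k _ ↦ mul_nonneg (hX i k) (hY k j)

section Fintype

variable {n : Type*} [Fintype n]

lemma isSymm_transpose_mul_add_mul {R : Type*} [CommRing R] (A : Matrix n n R)
    {D : Matrix n n R} (hD : D.IsSymm) : (Aᵀ * D + D * A).IsSymm := by
  rw [IsSymm, transpose_add, transpose_mul, transpose_mul, transpose_transpose, hD.eq, add_comm]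

lemma dotProduct_mulVec_eq_of_isSymm {Q : Matrix n n ℝ} (hQ : Q.IsSymm) (x u : n → ℝ) :
    (x * u) ⬝ᵥ (Q *ᵥ (x * u)) = ∑ i, (Q *ᵥ x) i * x i * u i ^ 2
      - (∑ i, ∑ j, Q i j * x i * x j * (u i - u j) ^ 2) / 2 := by
  have hswap : ∑ i, ∑ j, Q i j * x i * x j * u j ^ 2 = ∑ i, ∑ j, Q i j * x i * x j * u i ^ 2 := by
    rw [Finset.sum_comm]
    refine Finset.sum_congr rfl fun i _ ↦ Finset.sum_congr rfl fun j _ ↦ ?_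
    rw [hQ.apply i j]
    ring
  have hsquares : ∑ i, ∑ j, Q i j * x i * x j * (u i - u j) ^ 2 =
      ∑ i, ∑ j, Q i j * x i * x j * u i ^ 2 + ∑ i, ∑ j, Q i j * x i * x j * u j ^ 2
        - 2 * ∑ i, ∑ j, x i * u i * (Q i j * (x j * u j)) := by
    simp only [Finset.mul_sum, ← Finset.sum_add_distrib, ← Finset.sum_sub_distrib]
    exact Finset.sum_congr rfl fun i _ ↦ Finset.sum_congr rfl fun j _ ↦ by ring
  have hdiag : ∑ i, (Q *ᵥ x) i * x i * u i ^ 2 = ∑ i, ∑ j, Q i j * x i * x j * u i ^ 2 := by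
    simp only [mulVec, dotProduct, Finset.sum_mul]
    exact Finset.sum_congr rfl fun i _ ↦ Finset.sum_congr rfl fun j _ ↦ by ring
  have hquad : (x * u) ⬝ᵥ (Q *ᵥ (x * u)) = ∑ i, ∑ j, x i * u i * (Q i j * (x j * u j)) := by
    simp only [dotProduct, mulVec, Pi.mul_apply, Finset.mul_sum]
  rw [hquad, hdiag, hsquares, hswap]
  ring

lemma IsMetzler.dotProduct_mulVec_neg_of_isSymm {Q : Matrix n n ℝ} (hQ : Q.IsMetzler)
    (hQs : Q.IsSymm) {x : n → ℝ} (hx : ∀ i, 0 < x i)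
    (hQx : ∀ i, (Q *ᵥ x) i < 0) {v : n → ℝ} (hv : v ≠ 0) : v ⬝ᵥ (Q *ᵥ v) < 0 := by
  have hv_eq : v = x * (v / x) := by
    ext i
    simp [mul_div_cancel₀ _ (hx i).ne']
  obtain ⟨k, hk⟩ := Function.ne_iff.mp hv
  have hsquares : 0 ≤ ∑ i, ∑ j, Q i j * x i * x j * ((v / x) i - (v / x) j) ^ 2 := by
    refine Finset.sum_nonneg fun i _ ↦ Finset.sum_nonneg fun j _ ↦ ?_
    rcases eq_or_ne i j with rfl | hij
    · simp
    · have := hQ i j hij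
      have := hx i
      have := hx j
      positivity
  have hdiag : ∑ i, (Q *ᵥ x) i * x i * (v / x) i ^ 2 < 0 := by
    refine Finset.sum_neg' (fun i _ ↦ ?_) ⟨k, Finset.mem_univ k, ?_⟩
    · exact mul_nonpos_of_nonpos_of_nonneg (mul_nonpos_of_nonpos_of_nonneg (hQx i).le (hx i).le)
        (sq_nonneg _)
    · have : (v / x) k ≠ 0 := div_ne_zero hk (hx k).ne'
      exact mul_neg_of_neg_of_pos (mul_neg_of_neg_of_pos (hQx k) (hx k)) (by positivity)
  rw [hv_eq, dotProduct_mulVec_eq_of_isSymm hQs]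
  linarith

end Fintype

variable {n : Type*} [Fintype n] [DecidableEq n]

def IsDiagonallyStable (A : Matrix n n ℝ) : Prop :=
  ∃ d : n → ℝ, (∀ i, 0 < d i) ∧
    ∀ x : n → ℝ, x ≠ 0 → x ⬝ᵥ ((Aᵀ * diagonal d + diagonal d * A) *ᵥ x) < 0

lemma IsMetzler.transpose_mul_diagonal_add_diagonal_mul {A : Matrix n n ℝ} (hA : A.IsMetzler)
    {d : n → ℝ} (hd : ∀ i, 0 ≤ d i) : (Aᵀ * diagonal d + diagonal d * A).IsMetzler := by
  intro i j hij
  simp only [add_apply, mul_diagonal, diagonal_mul, transpose_apply]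
  exact add_nonneg (mul_nonneg (hA j i hij.symm) (hd j)) (mul_nonneg (hd i) (hA i j hij))

theorem IsMetzler.isDiagonallyStable {A : Matrix n n ℝ} (hA : A.IsMetzler) {x z : n → ℝ}
    (hx : ∀ i, 0 < x i) (hz : ∀ i, 0 < z i) (hAx : ∀ i, (A *ᵥ x) i < 0)
    (hAz : ∀ i, (Aᵀ *ᵥ z) i < 0) : A.IsDiagonallyStable := by
  have hd : ∀ i, 0 < (z / x) i := fun i ↦ div_pos (hz i) (hx i)
  have hdx : diagonal (z / x) *ᵥ x = z := by
    ext i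
    simp [mulVec_diagonal, div_mul_cancel₀ _ (hx i).ne']
  refine ⟨z / x, hd, fun v hv ↦ ?_⟩
  have hQ := hA.transpose_mul_diagonal_add_diagonal_mul fun i ↦ (hd i).le
  refine hQ.dotProduct_mulVec_neg_of_isSymm (isSymm_transpose_mul_add_mul A (isSymm_diagonal _))
    hx (fun i ↦ ?_) hv
  rw [add_mulVec, ← mulVec_mulVec, ← mulVec_mulVec, hdx, Pi.add_apply, mulVec_diagonal]
  nlinarith [hAz i, hAx i, hd i]

lemma mulVec_one_pos {R : Matrix n n ℝ} (hR : ∀ i j, 0 ≤ R i j) (hdet : R.det ≠ 0) (i : n) :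
    0 < (R *ᵥ 1) i := by
  have hrow : (R *ᵥ 1) i = ∑ j, R i j := by simp [mulVec, dotProduct]
  rw [hrow]
  refine (Finset.sum_nonneg fun j _ ↦ hR i j).lt_of_ne fun hzero ↦ hdet ?_
  exact det_eq_zero_of_row_eq_zero i fun j ↦
    (Finset.sum_eq_zero_iff_of_nonneg fun j _ ↦ hR i j).mp hzero.symm j (Finset.mem_univ j)

lemma ofReal_mem_spectrum_map_ofReal {A : Matrix n n ℝ} {s : ℝ} (h : (s • 1 - A).det = 0) :
    (s : ℂ) ∈ spectrum ℂ (A.map Complex.ofReal) := by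
  rw [mem_spectrum_iff_isRoot_charpoly, Polynomial.IsRoot, ← Complex.ofRealHom_eq_coe,
    show A.map Complex.ofReal = A.map Complex.ofRealHom from rfl, charpoly_map,
    Polynomial.eval_map_apply, eval_charpoly, scalar_apply, ← smul_one_eq_diagonal, h, map_zero]

section LinftyOpNorm

attribute [local instance] Matrix.linftyOpNormedRing Matrix.linftyOpNormedAlgebra

lemma inv_one_sub_apply_nonneg {X : Matrix n n ℝ} (hX : ∀ i j, 0 ≤ X i j) (hXn : ‖X‖ < 1)
    (i j : n) : 0 ≤ (1 - X)⁻¹ i j := by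
  have hsum : HasSum (fun k ↦ X ^ k) (1 - X)⁻¹ := by
    rw [nonsing_inv_eq_ringInverse]
    exact hasSum_geom_series_inverse X hXn
  exact (Pi.hasSum.mp (Pi.hasSum.mp hsum i) j).nonneg fun k ↦ pow_apply_nonneg hX k i j

lemma inv_sub_apply_nonneg {M P : Matrix n n ℝ} (hM : IsUnit M.det) (hMinv : ∀ i j, 0 ≤ M⁻¹ i j)
    (hP : ∀ i j, 0 ≤ P i j) (hMP : ‖M⁻¹ * P‖ < 1) (i j : n) : 0 ≤ (M - P)⁻¹ i j := by
  have hfactor : M - P = M * (1 - M⁻¹ * P) := by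
    rw [mul_sub, mul_one, ← mul_assoc, mul_nonsing_inv _ hM, one_mul]
  rw [hfactor, mul_inv_rev]
  exact mul_apply_nonneg (inv_one_sub_apply_nonneg (mul_apply_nonneg hMinv hP) hMP) hMinv i j

lemma inv_smul_one_sub_apply_nonneg_of_norm_lt {B : Matrix n n ℝ} (hB : ∀ i j, 0 ≤ B i j) {c : ℝ}
    (hc : ‖B‖ < c) (i j : n) : 0 ≤ (c • 1 - B)⁻¹ i j := by
  have hc0 : 0 < c := (norm_nonneg B).trans_lt hc
  have hinv : (c • (1 : Matrix n n ℝ))⁻¹ = c⁻¹ • 1 :=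
    inv_eq_right_inv (by rw [smul_mul_smul, mul_one, mul_inv_cancel₀ hc0.ne', one_smul])
  refine inv_sub_apply_nonneg (by simp [hc0.ne']) (fun i j ↦ ?_) hB ?_ i j
  · rw [hinv]
    by_cases h : i = j <;> simp [h, hc0.le]
  · rw [hinv, smul_one_mul, norm_smul, Real.norm_of_nonneg (inv_nonneg.2 hc0.le),
      inv_mul_lt_iff₀ hc0, mul_one]
    exact hc

lemma inv_sub_smul_one_apply_nonneg {M : Matrix n n ℝ} (hM : IsUnit M.det)
    (hMinv : ∀ i j, 0 ≤ M⁻¹ i j) {h : ℝ} (hh : 0 ≤ h) (hhM : h * ‖M⁻¹‖ < 1) (i j : n) :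
    0 ≤ (M - h • 1)⁻¹ i j := by
  refine inv_sub_apply_nonneg hM hMinv (fun i j ↦ ?_) ?_ i j
  · by_cases hij : i = j <;> simp [hij, hh]
  · rwa [mul_smul_one, norm_smul, Real.norm_of_nonneg hh]

theorem inv_smul_one_sub_apply_nonneg {B : Matrix n n ℝ} (hB : ∀ i j, 0 ≤ B i j) {t : ℝ}
    (hdet : ∀ s, t ≤ s → (s • 1 - B).det ≠ 0) (i j : n) : 0 ≤ (t • 1 - B)⁻¹ i j := by
  set c := max t (‖B‖ + 1)
  let S := {s : ℝ | ∀ i j, 0 ≤ (s • (1 : Matrix n n ℝ) - B)⁻¹ i j}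
  have hclosed : IsClosed (S ∩ Set.Icc t c) := by
    rw [Set.inter_comm]
    refine ContinuousOn.preimage_isClosed_of_isClosed
      (t := {M : Matrix n n ℝ | ∀ i j, 0 ≤ M i j}) (fun s hs ↦ ?_) isClosed_Icc ?_
    · have hcont : Continuous fun s : ℝ ↦ s • (1 : Matrix n n ℝ) - B := by fun_prop
      exact ((continuousAt_matrix_inv _ (NormedRing.inverse_continuousAt
        (Units.mk0 _ (hdet s hs.1)))).comp (x := s) hcont.continuousAt).continuousWithinAt
    · simp only [Set.ofPred_forall]
      exact isClosed_iInter fun i ↦ isClosed_iInter fun j ↦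
        isClosed_le continuous_const (by fun_prop)
  have hc : c ∈ S :=
    inv_smul_one_sub_apply_nonneg_of_norm_lt hB (lt_max_of_lt_right (lt_add_one _))
  have hstep : ∀ x ∈ S ∩ Set.Ioc t c, (S ∩ Set.Ico t x).Nonempty := by
    rintro x ⟨hxS, htx, -⟩
    obtain ⟨δ, hδ, hδR⟩ := exists_pos_mul_lt one_pos ‖(x • (1 : Matrix n n ℝ) - B)⁻¹‖
    set h := min δ (x - t)
    have hh : 0 < h := lt_min hδ (sub_pos.2 htx)
    refine ⟨x - h, fun i j ↦ ?_, le_sub_comm.1 (min_le_right _ _), sub_lt_self x hh⟩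
    rw [show (x - h) • (1 : Matrix n n ℝ) - B = (x • 1 - B) - h • 1 by module]
    refine inv_sub_smul_one_apply_nonneg (isUnit_iff_ne_zero.2 (hdet x htx.le)) hxS hh.le ?_ i j
    rw [mul_comm]
    exact (mul_le_mul_of_nonneg_left (min_le_left _ _) (norm_nonneg _)).trans_lt hδR
  exact hclosed.mem_of_ge_of_forall_exists_lt hc (le_max_left _ _) hstep i j

end LinftyOpNorm

theorem IsMetzler.neg_inv_apply_nonneg {A : Matrix n n ℝ} (hA : A.IsMetzler)
    (hdet : ∀ s : ℝ, 0 ≤ s → (s • 1 - A).det ≠ 0) (i j : n) : 0 ≤ (-A)⁻¹ i j := by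
  set σ := ∑ k, |A k k|
  have hB : ∀ i j, 0 ≤ (A + σ • 1) i j := by
    intro i j
    rcases eq_or_ne i j with rfl | hij
    · have : |A i i| ≤ σ :=
        Finset.single_le_sum (f := fun k ↦ |A k k|) (fun k _ ↦ abs_nonneg _) (Finset.mem_univ i)
      simp only [add_apply, smul_apply, one_apply_eq, smul_eq_mul, mul_one]
      linarith [neg_abs_le (A i i)]
    · simpa [hij] using hA i j hij
  have hdetB : ∀ s, σ ≤ s → (s • 1 - (A + σ • 1)).det ≠ 0 := fun s hs ↦ by
    rw [show s • 1 - (A + σ • 1) = (s - σ) • 1 - A by module]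
    exact hdet _ (sub_nonneg.2 hs)
  simpa using inv_smul_one_sub_apply_nonneg hB hdetB i j

end Matrix

theorem stmt_8 (N : ℕ) (A : Matrix (Fin N) (Fin N) ℝ)
    (hMetzler : ∀ i j, i ≠ j → 0 ≤ A i j)
    (hHurwitz : ∀ μ ∈ spectrum ℂ (A.map (Complex.ofReal)), μ.re < 0) :
    ∃ d : Fin N → ℝ, (∀ i, 0 < d i) ∧
      ∀ x : Fin N → ℝ, x ≠ 0 →
        x ⬝ᵥ ((Aᵀ * Matrix.diagonal d + Matrix.diagonal d * A).mulVec x) < 0 := by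
  have hdet : ∀ s : ℝ, 0 ≤ s → (s • (1 : Matrix (Fin N) (Fin N) ℝ) - A).det ≠ 0 :=
    fun s hs h ↦ (hHurwitz _ (ofReal_mem_spectrum_map_ofReal h)).not_ge (by simpa using hs)
  have hA : IsUnit (-A).det := isUnit_iff_ne_zero.2 (by simpa using hdet 0 le_rfl)
  have hR : ∀ i j, 0 ≤ (-A)⁻¹ i j := IsMetzler.neg_inv_apply_nonneg hMetzler hdet
  have hRdet : (-A)⁻¹.det ≠ 0 := (isUnit_nonsing_inv_det _ hA).ne_zero
  have hAR : A * (-A)⁻¹ = -1 := by rw [← neg_neg (A * _), ← neg_mul, mul_nonsing_inv _ hA]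
  have hRA : (-A)⁻¹ * A = -1 := by rw [← neg_neg (_ * A), ← mul_neg, nonsing_inv_mul _ hA]
  refine IsMetzler.isDiagonallyStable hMetzler (mulVec_one_pos hR hRdet)
    (mulVec_one_pos (R := (-A)⁻¹ᵀ) (fun i j ↦ hR j i) (by rwa [det_transpose]))
    (fun i ↦ ?_) (fun i ↦ ?_)
  · simp [mulVec_mulVec, hAR, neg_mulVec]
  · simp [mulVec_mulVec, ← transpose_mul, hRA, neg_mulVec]
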